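/- Let σ ∈ S_k with k ≥ 3 such that both σ and σ̂ (σ with first two entries swapped) contain 231 classically. Then Sort(SC_σ) = Av(132), the class of 132-avoiding permutations. -/

import Mathlib

open List Finset

attribute [local instance] Classical.propDecidable

/-- Two lists (with distinct entries) have the same relative order. -/
def SameRel (u v : List ℕ) : Prop :=
  u.length = v.length ∧ ∀ i j, i < j → j < u.length →
    (u.getD i 0 < u.getD j 0 ↔ v.getD i 0 < v.getD j 0)

/-- `l` contains `σ` as a classical pattern. -/
def ContainsPat (l σ : List ℕ) : Prop := ∃ u, u.Sublist l ∧ SameRel u σ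

/-- `l` contains `σ` as a consecutive pattern. -/
def ContainsC (l σ : List ℕ) : Prop := ∃ u, u.IsInfix l ∧ SameRel u σ

/-- `l` avoids `σ` as a classical pattern. -/
def AvoidsPat (l σ : List ℕ) : Prop := ¬ ContainsPat l σ

/-- `l` avoids `σ` as a consecutive pattern. -/
def AvoidsC (l σ : List ℕ) : Prop := ¬ ContainsC l σ

/-- Generic right-greedy stack-sorting: push the next entry unless doing so creates a
`bad` stack (read top to bottom); otherwise pop the top of the stack to the output. -/
noncomputable def stackAux (bad : List ℕ → Prop) : List ℕ → List ℕ → List ℕ → List ℕ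
  | [], stack, out => out ++ stack
  | a :: rest, stack, out =>
    if bad (a :: stack) then
      match stack with
      | [] => stackAux bad rest [a] out
      | b :: s => stackAux bad (a :: rest) s (out ++ [b])
    else stackAux bad rest (a :: stack) out
  termination_by i s _ => 2 * i.length + s.length
  decreasing_by all_goals (first | omega | (simp [List.length_cons]; try omega))

noncomputable def SCgen (bad : List ℕ → Prop) (π : List ℕ) : List ℕ := stackAux bad π [] []

/-- The consecutive-`σ`-avoiding stack-sorting map. -/
noncomputable def SCc (σ : List ℕ) : List ℕ → List ℕ := SCgen (fun l => ContainsC l σ)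

/-- The classical-`σ`-avoiding stack-sorting map. -/
noncomputable def sCl (σ : List ℕ) : List ℕ → List ℕ := SCgen (fun l => ContainsPat l σ)

/-- `π` is (the one-line notation of) a permutation of `{1, …, n}`. -/
def IsPermList (n : ℕ) (π : List ℕ) : Prop := π.Perm ((List.range n).map (· + 1))

/-- Complementation on permutations of `{1, …, n}`. -/
def compl (n : ℕ) (π : List ℕ) : List ℕ := π.map (fun x => n + 1 - x)

/-- The finset of permutations of `{1, …, n}` in one-line notation. -/
def permsFinset (n : ℕ) : Finset (List ℕ) := ((List.range n).map (· + 1)).permutations.toFinset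

/-- The number of preimages of `π` in `S_n` under `f`. -/
noncomputable def preCount (f : List ℕ → List ℕ) (n : ℕ) (π : List ℕ) : ℕ :=
  ((permsFinset n).filter (fun τ => f τ = π)).card

/-!
As long as no push is blocked, `SC_σ` pushes all of `π` and then pops it, so `SC_σ(π)` is the
reverse of `π`; and the reverse of `π` avoids 231 iff `π` avoids 132. A blocked push happens
exactly when some reversed prefix of `π` contains `σ` consecutively; then `π` contains
`rev(σ)`, hence 132 because `σ` contains 231. At the first blocked push the incoming entry `x`
starts the occurrence `x y v` of `σ` (the stack itself avoids `σ`), the stack is popped down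
to and including `y`, and `x v` is output later in this order; so the output contains
`y x v`, which is order-isomorphic to `σ̂` and therefore contains 231. In both cases the two
sides of the equivalence fail.
-/

lemma IsPermList.nodup {n : ℕ} {π : List ℕ} (h : IsPermList n π) : π.Nodup :=
  h.nodup_iff.2 (List.nodup_range.map fun _ _ => Nat.succ_inj.1)

lemma IsPermList.length_eq {n : ℕ} {π : List ℕ} (h : IsPermList n π) : π.length = n := by
  simpa using List.Perm.length_eq h

/-- `SameRel` for all pairs of positions: unlike `SameRel`, it survives reversal and swaps. -/
def SameOrder (u v : List ℕ) : Prop :=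
  u.length = v.length ∧ ∀ i j, i < u.length → j < u.length →
    (u.getD i 0 < u.getD j 0 ↔ v.getD i 0 < v.getD j 0)

namespace SameOrder

variable {u v w : List ℕ}

lemma sameRel (h : SameOrder u v) : SameRel u v :=
  ⟨h.1, fun i j hij hj => h.2 i j (hij.trans hj) hj⟩

lemma trans (h₁ : SameOrder u v) (h₂ : SameOrder v w) : SameOrder u w :=
  ⟨h₁.1.trans h₂.1, fun i j hi hj =>
    (h₁.2 i j hi hj).trans (h₂.2 i j (h₁.1 ▸ hi) (h₁.1 ▸ hj))⟩

lemma reverse (h : SameOrder u v) : SameOrder u.reverse v.reverse := by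
  obtain ⟨hl, hrel⟩ := h
  refine ⟨by simp [hl], fun i j hi hj => ?_⟩
  simp only [List.length_reverse] at hi hj
  simp only [List.getD_eq_getElem?_getD, List.getElem?_reverse, hi, hj, hl ▸ hi, hl ▸ hj]
  rw [← hl]
  simpa only [List.getD_eq_getElem?_getD] using hrel _ _ (by omega) (by omega)

lemma swap {x y p q : ℕ} {m m' : List ℕ} (h : SameOrder (x :: y :: m) (p :: q :: m')) :
    SameOrder (y :: x :: m) (q :: p :: m') := by
  obtain ⟨hl, hrel⟩ := h
  simp only [List.length_cons] at hl hrel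
  refine ⟨by simpa using hl, fun i j hi hj => ?_⟩
  have swap_getD : ∀ (c d : ℕ) (t : List ℕ) (i : ℕ),
      (d :: c :: t).getD i 0 = (c :: d :: t).getD (if i = 0 then 1 else if i = 1 then 0 else i) 0
    | _, _, _, 0 | _, _, _, 1 | _, _, _, _ + 2 => by simp
  rw [swap_getD x y, swap_getD x y, swap_getD p q, swap_getD p q]
  simp only [List.length_cons] at hi hj
  exact hrel _ _ (by split_ifs <;> omega) (by split_ifs <;> omega)

lemma exists_sublist (h : SameOrder u v) (hw : w.Sublist v) :
    ∃ w', w'.Sublist u ∧ SameOrder w' w := by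
  obtain ⟨hl, hrel⟩ := h
  obtain ⟨is, rfl, hmono⟩ := List.sublist_eq_map_getElem hw
  refine ⟨(is.map (Fin.cast hl.symm)).map (fun i => u[i]),
    List.map_getElem_sublist (hmono.map _ fun _ _ => id), by simp, fun i j hi hj => ?_⟩
  simp only [List.length_map] at hi hj
  have hi' : (is[i] : ℕ) < u.length := by have := is[i].isLt; omega
  have hj' : (is[j] : ℕ) < u.length := by have := is[j].isLt; omega
  simpa [List.getD_eq_getElem?_getD, hi, hj, hi', hj'] using hrel _ _ hi' hj'

end SameOrder

lemma SameRel.sameOrder {u v : List ℕ} (h : SameRel u v) (hu : u.Nodup) (hv : v.Nodup) :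
    SameOrder u v := by
  obtain ⟨hl, hrel⟩ := h
  refine ⟨hl, fun i j hi hj => ?_⟩
  have hne : ∀ {w : List ℕ}, w.Nodup → ∀ {i j}, i < w.length → j < w.length → i ≠ j →
      w.getD i 0 ≠ w.getD j 0 := fun hw i j hi hj hij => by
    rwa [List.getD_eq_getElem _ _ hi, List.getD_eq_getElem _ _ hj, Ne, hw.getElem_inj_iff]
  rcases Nat.lt_trichotomy i j with hij | rfl | hij
  · exact hrel i j hij hj
  · simp
  · have := hrel j i hij hi
    have := hne hu hi hj hij.ne'
    have := hne hv (hl ▸ hi) (hl ▸ hj) hij.ne'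
    omega

lemma ContainsPat.of_sameOrder {l u τ p : List ℕ} (hu : u.Sublist l) (huτ : SameOrder u τ)
    (hτ : ContainsPat τ p) (hτnd : τ.Nodup) (hp : p.Nodup) : ContainsPat l p := by
  obtain ⟨v, hv, hvp⟩ := hτ
  obtain ⟨w, hw, hwv⟩ := huτ.exists_sublist hv
  exact ⟨w, hw.trans hu, (hwv.trans (hvp.sameOrder (hv.nodup hτnd) hp)).sameRel⟩

lemma ContainsPat.reverse {l p : List ℕ} (h : ContainsPat l p) (hl : l.Nodup) (hp : p.Nodup) :
    ContainsPat l.reverse p.reverse := by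
  obtain ⟨u, hu, hup⟩ := h
  exact ⟨u.reverse, hu.reverse, (hup.sameOrder (hu.nodup hl) hp).reverse.sameRel⟩

lemma containsPat_reverse_iff {l p : List ℕ} (hl : l.Nodup) (hp : p.Nodup) :
    ContainsPat l.reverse p ↔ ContainsPat l p.reverse := by
  constructor
  · intro h
    simpa using h.reverse (List.nodup_reverse.2 hl) hp
  · intro h
    simpa using h.reverse hl (List.nodup_reverse.2 hp)

lemma not_containsC_of_length_lt {l σ : List ℕ} (h : l.length < σ.length) : ¬ ContainsC l σ :=
  fun ⟨_, hinf, hrel⟩ => by have := hinf.length_le; have := hrel.1; omega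

lemma ContainsC.mono {t T σ : List ℕ} (h : ContainsC t σ) (htT : t <:+: T) : ContainsC T σ :=
  let ⟨u, hinf, hrel⟩ := h
  ⟨u, hinf.trans htT, hrel⟩

lemma ContainsC.exists_prefix_of_not_containsC_tail {x y : ℕ} {t σ : List ℕ}
    (hσ : 2 ≤ σ.length) (h : ContainsC (x :: y :: t) σ) (htail : ¬ ContainsC (y :: t) σ) :
    ∃ v, v <+: t ∧ SameRel (x :: y :: v) σ := by
  obtain ⟨u, ⟨_ | ⟨c, w₁⟩, w₂, he⟩, hrel⟩ := h
  · rcases u with _ | ⟨u₁, _ | ⟨u₂, v⟩⟩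
    · simp [← hrel.1] at hσ
    · simp [← hrel.1] at hσ
    · simp only [List.nil_append, List.cons_append, List.cons.injEq] at he
      obtain ⟨rfl, rfl, he⟩ := he
      exact ⟨v, ⟨w₂, he⟩, hrel⟩
  · exact (htail ⟨u, ⟨w₁, w₂, by simpa using congrArg List.tail he⟩, hrel⟩).elim

section StackSorting

variable (bad : List ℕ → Prop)

lemma stackAux_nil (s o : List ℕ) : stackAux bad [] s o = o ++ s := by
  rw [stackAux.eq_def]

lemma stackAux_push {a : ℕ} {s : List ℕ} (h : ¬ bad (a :: s)) (l o : List ℕ) :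
    stackAux bad (a :: l) s o = stackAux bad l (a :: s) o := by
  rw [stackAux.eq_def]
  simp [h]

lemma stackAux_pop {a x : ℕ} {s : List ℕ} (h : bad (a :: x :: s)) (l o : List ℕ) :
    stackAux bad (a :: l) (x :: s) o = stackAux bad (a :: l) s (o ++ [x]) := by
  rw [stackAux.eq_def]
  simp [h]

/-- Some push fails when the entries of `p` are pushed one by one onto the stack `s`. -/
def PushBlocked (s p : List ℕ) : Prop :=
  ∃ q x, q ++ [x] <+: p ∧ bad (x :: (q.reverse ++ s))

variable {bad}

lemma not_pushBlocked_nil (s : List ℕ) : ¬ PushBlocked bad s [] :=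
  fun ⟨q, x, h, _⟩ => by simpa using h.length_le

lemma pushBlocked_cons {a : ℕ} {s p : List ℕ} :
    PushBlocked bad s (a :: p) ↔ bad (a :: s) ∨ PushBlocked bad (a :: s) p := by
  constructor
  · rintro ⟨_ | ⟨c, q⟩, x, hpre, hbad⟩
    · simp only [List.nil_append, List.singleton_prefix_cons_iff] at hpre
      exact Or.inl (hpre ▸ by simpa using hbad)
    · simp only [List.cons_append, List.cons_prefix_cons] at hpre
      exact Or.inr ⟨q, x, hpre.2, by simpa [← hpre.1] using hbad⟩
  · rintro (hbad | ⟨q, x, hpre, hbad⟩)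
    · exact ⟨[], a, by simp, by simpa using hbad⟩
    · exact ⟨a :: q, x, by simpa using hpre, by simpa using hbad⟩

lemma stackAux_of_not_pushBlocked {s p : List ℕ} (h : ¬ PushBlocked bad s p) (o : List ℕ) :
    stackAux bad p s o = o ++ p.reverse ++ s := by
  induction p generalizing s with
  | nil => simp [stackAux_nil]
  | cons a p ih =>
    rw [pushBlocked_cons, not_or] at h
    rw [stackAux_push bad h.1, ih h.2]
    simp

lemma SCgen_eq_reverse_of_not_pushBlocked {π : List ℕ} (h : ¬ PushBlocked bad [] π) :
    SCgen bad π = π.reverse := by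
  simp [SCgen, stackAux_of_not_pushBlocked h]

lemma exists_first_pushBlocked {s p : List ℕ} (hs : ¬ bad s) (h : PushBlocked bad s p) :
    ∃ q x l, p = q ++ x :: l ∧ bad (x :: (q.reverse ++ s)) ∧ ¬ bad (q.reverse ++ s) ∧
      ∀ o, stackAux bad p s o = stackAux bad (x :: l) (q.reverse ++ s) o := by
  induction p generalizing s with
  | nil => exact (not_pushBlocked_nil s h).elim
  | cons a p ih =>
    by_cases ha : bad (a :: s)
    · exact ⟨[], a, p, rfl, ha, hs, fun _ => rfl⟩
    · obtain ⟨q, x, l, rfl, hbad, hgood, hrun⟩ :=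
        ih ha ((pushBlocked_cons.1 h).resolve_left ha)
      refine ⟨a :: q, x, l, rfl, by simpa using hbad, by simpa using hgood, fun o => ?_⟩
      rw [stackAux_push bad ha, hrun]
      simp

lemma stackAux_pops {a : ℕ} (hshort : ¬ bad [a]) (l : List ℕ) {t : List ℕ}
    (h : bad (a :: t)) (o : List ℕ) :
    ∃ d x t', t = d ++ x :: t' ∧ bad (a :: x :: t') ∧
      stackAux bad (a :: l) t o = stackAux bad l (a :: t') (o ++ d ++ [x]) := by
  induction t generalizing o with
  | nil => exact (hshort h).elim
  | cons y t ih =>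
    rw [stackAux_pop bad h]
    by_cases ht : bad (a :: t)
    · obtain ⟨d, x, t', rfl, hbad, hrun⟩ := ih ht (o ++ [y])
      exact ⟨y :: d, x, t', rfl, hbad, by simp [hrun]⟩
    · exact ⟨[], y, t, rfl, h, by simp [stackAux_push bad ht]⟩

lemma exists_stackAux_eq_append_sublist (l s o : List ℕ) :
    ∃ r, stackAux bad l s o = o ++ r ∧ s.Sublist r := by
  fun_induction stackAux bad l s o with
  | case1 s o => exact ⟨s, rfl, .refl s⟩
  | case2 a l o _ ih =>
    obtain ⟨r, hr, -⟩ := ih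
    exact ⟨r, hr, List.nil_sublist r⟩
  | case3 a l o x s _ ih =>
    obtain ⟨r, hr, hs⟩ := ih
    exact ⟨x :: r, by simp [hr], hs.cons_cons x⟩
  | case4 a l s o _ ih =>
    obtain ⟨r, hr, hs⟩ := ih
    exact ⟨r, hr, (List.sublist_cons_self a s).trans hs⟩

end StackSorting

lemma nodup_cons_reverse_of_prefix {π q : List ℕ} {x : ℕ} (hπ : π.Nodup)
    (h : q ++ [x] <+: π) : (x :: q.reverse).Nodup := by
  have hrev : x :: q.reverse = (q ++ [x]).reverse := by simp
  exact hrev ▸ List.nodup_reverse.2 (h.sublist.nodup hπ)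

lemma ContainsPat.of_pushBlocked {π σ p : List ℕ}
    (h : PushBlocked (ContainsC · σ) [] π) (hπ : π.Nodup) (hσ : σ.Nodup)
    (hσp : ContainsPat σ p) (hp : p.Nodup) : ContainsPat π p.reverse := by
  obtain ⟨q, x, hpre, u, hu, huσ⟩ := h
  rw [List.append_nil] at hu
  have hrev : u.reverse.Sublist π :=
    (by simpa using hu.sublist.reverse : u.reverse.Sublist (q ++ [x])).trans hpre.sublist
  have hu_nd := hu.sublist.nodup (nodup_cons_reverse_of_prefix hπ hpre)
  exact .of_sameOrder hrev (huσ.sameOrder hu_nd hσ).reverse (hσp.reverse hσ hp)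
    (List.nodup_reverse.2 hσ) (List.nodup_reverse.2 hp)

lemma exists_sublist_SCc_sameOrder_swap {a b : ℕ} {rest π : List ℕ}
    (hlen : 2 < (a :: b :: rest).length)
    (hσ : (a :: b :: rest).Nodup) (hπ : π.Nodup)
    (h : PushBlocked (ContainsC · (a :: b :: rest)) [] π) :
    ∃ u, u.Sublist (SCc (a :: b :: rest) π) ∧ SameOrder u (b :: a :: rest) := by
  have hshort : ∀ l : List ℕ, l.length ≤ 2 → ¬ ContainsC l (a :: b :: rest) := fun _ hl =>
    not_containsC_of_length_lt (by omega)
  obtain ⟨q, x, l, rfl, hbad, hstack, hrun⟩ :=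
    exists_first_pushBlocked (bad := (ContainsC · (a :: b :: rest))) (hshort [] (by simp)) h
  simp only [List.append_nil] at hbad hstack hrun
  obtain ⟨d, y, t, ht, hbad', hpops⟩ :=
    stackAux_pops (bad := (ContainsC · (a :: b :: rest))) (hshort [x] (by simp)) l hbad []
  have htail : ¬ ContainsC (y :: t) (a :: b :: rest) := fun hc =>
    hstack (hc.mono (ht ▸ (List.suffix_append d _).isInfix))
  obtain ⟨v, hv, hxyv⟩ := hbad'.exists_prefix_of_not_containsC_tail (by simp) htail
  obtain ⟨r, hr, hxt⟩ := exists_stackAux_eq_append_sublist l (x :: t) ([] ++ d ++ [y])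
  have hsub : (x :: y :: v).Sublist (x :: q.reverse) :=
    (hv.sublist.cons_cons y).trans (ht ▸ List.sublist_append_right d _) |>.cons_cons x
  have hnd := hsub.nodup (nodup_cons_reverse_of_prefix hπ ⟨l, by simp⟩)
  refine ⟨y :: x :: v, ?_, (hxyv.sameOrder hnd hσ).swap⟩
  rw [SCc, SCgen, hrun, hpops, hr]
  simpa using (List.sublist_append_right d [y]).append ((hv.sublist.cons_cons x).trans hxt)

/-- If σ ∈ S_k (k ≥ 3) and both σ and σ̂ contain 231 classically, then
Sort(SC_σ) = Av(132). -/
theorem sort_sc_eq_av132 (k : ℕ) (hk : 3 ≤ k) (a b : ℕ) (rest : List ℕ) (σ : List ℕ)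
    (hσdef : σ = a :: b :: rest) (hσ : IsPermList k σ)
    (hσ231 : ContainsPat σ [2, 3, 1]) (hhat : ContainsPat (b :: a :: rest) [2, 3, 1])
    (n : ℕ) (π : List ℕ) (hπ : IsPermList n π) :
    AvoidsPat (SCc σ π) [2, 3, 1] ↔ AvoidsPat π [1, 3, 2] := by
  subst hσdef
  have hπnd := hπ.nodup
  have hσnd := hσ.nodup
  by_cases hblock : PushBlocked (ContainsC · (a :: b :: rest)) [] π
  · obtain ⟨u, hu, huσ⟩ :=
      exists_sublist_SCc_sameOrder_swap (hσ.length_eq ▸ hk) hσnd hπnd hblock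
    have h231 := ContainsPat.of_sameOrder hu huσ hhat (hσnd.perm (.swap b a rest)) (by decide)
    have h132 : ContainsPat π [1, 3, 2] := hσ231.of_pushBlocked hblock hπnd hσnd (by decide)
    exact iff_of_false (not_not.2 h231) (not_not.2 h132)
  · rw [AvoidsPat, AvoidsPat, SCc, SCgen_eq_reverse_of_not_pushBlocked hblock,
      containsPat_reverse_iff hπnd (by decide)]
    rfl
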